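/- arXiv:1904.05602 — 3 statements merged into one kernel-verified Lean document; each statement's English description precedes it below -/
import Mathlib

section
/- Let R be a commutative ring, M a projective R-module, and m a positive integer such that the integer m! acts invertibly on M. Let the symmetric group Σ_m act on the m-fold tensor power M^{⊗m} = M ⊗_R ⋯ ⊗_R M by permuting the tensor factors. Then the coinvariants (M^{⊗m})_{Σ_m} is a projective R-module. -/
/-!
The order `m!` of `Σ_m` acts invertibly on `M^{⊗m}` (it may be moved into a single tensor
factor), so `x ↦ (1/m!) ∑_σ σ x` descends to a section of the projection onto the
coinvariants. The coinvariants are therefore a direct summand of the projective module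
`M^{⊗m}`.
-/

open scoped TensorProduct

instance Module.Projective.tensorPower (R M : Type*) [CommRing R] [AddCommGroup M] [Module R M]
    [Module.Projective R M] (n : ℕ) : Module.Projective R (⨂[R]^n M) := by
  induction n with
  | zero => exact .of_equiv (PiTensorProduct.isEmptyEquiv (Fin 0)).symm
  | succ n ih =>
    have : Module.Projective R (⨂[R]^1 M) := .of_equiv (PiTensorProduct.subsingletonEquiv 0).symm
    exact .of_equiv (TensorPower.mulEquiv (n := n) (m := 1))

namespace PiTensorProduct

section Smul

variable {ι R : Type*} [CommRing R] {s : ι → Type*} [∀ i, AddCommGroup (s i)]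
  [∀ i, Module R (s i)]

theorem bijective_smul_of_bijective_smul [DecidableEq ι] {r : R} (i₀ : ι)
    (h : Function.Bijective fun x : s i₀ => r • x) :
    Function.Bijective fun x : ⨂[R] i, s i => r • x := by
  let e : s i₀ ≃ₗ[R] s i₀ := LinearEquiv.ofBijective (r • LinearMap.id) h
  have he : r • (e.symm : s i₀ →ₗ[R] s i₀) = LinearMap.id := LinearMap.ext e.apply_symm_apply
  have hinv : r • map (Function.update (fun i => LinearMap.id) i₀ (e.symm : s i₀ →ₗ[R] s i₀)) =
      LinearMap.id := by
    rw [← PiTensorProduct.map_update_smul, he, Function.update_eq_self, map_id]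
  refine Function.bijective_iff_has_inverse.mpr
    ⟨map (Function.update (fun i => LinearMap.id) i₀ e.symm), fun x => ?_, fun x => ?_⟩
  · simpa using LinearMap.congr_fun hinv x
  · simpa using LinearMap.congr_fun hinv x

end Smul

variable (R ι M : Type*) [CommRing R] [AddCommGroup M] [Module R M]

def permRepresentation : Representation R (Equiv.Perm ι) (⨂[R] _ : ι, M) where
  toFun σ := reindex R (fun _ => M) σ
  map_one' := by rw [Equiv.Perm.one_def, reindex_refl]; rfl
  map_mul' σ τ := by rw [Equiv.Perm.mul_def, ← reindex_trans]; rfl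

end PiTensorProduct

namespace Representation.Coinvariants

variable {k G V : Type*} [CommRing k] [Group G] [Fintype G] [AddCommGroup V] [Module k V]
  (ρ : Representation k G V)

theorem mk_norm_apply (x : V) : mk ρ (norm ρ x) = Fintype.card G • mk ρ x := by
  simp [norm, LinearMap.sum_apply, map_sum]

theorem exists_rightInverse_mk (h : Function.Bijective fun x : V => (Fintype.card G : k) • x) :
    ∃ s : Coinvariants ρ →ₗ[k] V, mk ρ ∘ₗ s = LinearMap.id := by
  let e : V ≃ₗ[k] V := LinearEquiv.ofBijective ((Fintype.card G : k) • LinearMap.id) h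
  have he : ∀ x, e x = (Fintype.card G : k) • x := fun _ => rfl
  have he_symm_comm (f : V →ₗ[k] V) (x : V) : e.symm (f x) = f (e.symm x) :=
    e.injective <| by rw [e.apply_symm_apply, he, ← map_smul, ← he, e.apply_symm_apply]
  refine ⟨lift ρ (norm ρ ∘ₗ e.symm) fun g => ?_, hom_ext (LinearMap.ext fun x => ?_)⟩
  · ext x
    simp [he_symm_comm]
  · simp only [LinearMap.comp_apply, lift_mk, LinearMap.id_apply, mk_norm_apply,
      ← Nat.cast_smul_eq_nsmul k, ← map_smul, ← he, LinearEquiv.coe_coe, e.apply_symm_apply]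

theorem projective [Module.Projective k V]
    (h : Function.Bijective fun x : V => (Fintype.card G : k) • x) :
    Module.Projective k (Coinvariants ρ) :=
  have ⟨s, hs⟩ := exists_rightInverse_mk ρ h
  .of_split s (mk ρ) hs

end Representation.Coinvariants

/-- Let `R` be a commutative ring, `M` a projective `R`-module, and `m`
a positive integer such that the integer `m!` acts invertibly on `M`.  Let the symmetric
group `Σ_m` act on the `m`-fold tensor power `M^{⊗m}` by permuting the tensor factors
(`σ` acts by `PiTensorProduct.reindex`, sending `x₁ ⊗ ⋯ ⊗ xₘ` to
`x_{σ⁻¹ 1} ⊗ ⋯ ⊗ x_{σ⁻¹ m}`).  Then the coinvariants `(M^{⊗m})_{Σ_m}` form a projective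
`R`-module. -/
theorem stmt4 (R : Type*) [CommRing R] (M : Type*) [AddCommGroup M] [Module R M]
    (hM : Module.Projective R M) (m : ℕ) (hm : 0 < m)
    (hinv : Function.Bijective fun x : M => ((Nat.factorial m : ℤ)) • x) :
    Module.Projective R
      ((⨂[R] (_ : Fin m), M) ⧸
        Submodule.span R {y : ⨂[R] (_ : Fin m), M |
          ∃ (σ : Equiv.Perm (Fin m)) (t : ⨂[R] (_ : Fin m), M),
            PiTensorProduct.reindex R (fun _ : Fin m => M) σ t - t = y}) := by
  let ρ := PiTensorProduct.permRepresentation R (Fin m) M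
  have hker : {y | ∃ σ t, PiTensorProduct.reindex R (fun _ : Fin m => M) σ t - t = y} =
      Set.range fun σt : Equiv.Perm (Fin m) × _ => ρ σt.1 σt.2 - σt.2 := by
    ext y
    simp [ρ, PiTensorProduct.permRepresentation]
  have hM' : Function.Bijective fun x : M => (Fintype.card (Equiv.Perm (Fin m)) : R) • x := by
    simpa only [Fintype.card_perm, Fintype.card_fin, ← Int.cast_smul_eq_zsmul R,
      Int.cast_natCast] using hinv
  rw [hker]
  exact Representation.Coinvariants.projective ρ
    (PiTensorProduct.bijective_smul_of_bijective_smul ⟨0, hm⟩ hM')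
end

section
/- Let A be a commutative ring, B a commutative A-algebra, and G a finite group acting on B by A-algebra automorphisms (a group homomorphism G →* (B ≃ₐ[A] B)). Define the A-algebra homomorphism Ξ : B ⊗_A B → (G → B) by Ξ(b₁ ⊗ b₂)(γ) = b₁ · (γ • b₂). If Ξ is bijective, then B is formally unramified over A (Algebra.FormallyUnramified A B). -/
open scoped TensorProduct

/-- Let `A` be a commutative ring, `B` a commutative `A`-algebra, and
`G` a finite group acting on `B` by `A`-algebra automorphisms.  Let
`Ξ : B ⊗_A B →ₐ[A] (G → B)` be the `A`-algebra homomorphism determined by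
`Ξ (b₁ ⊗ b₂) γ = b₁ * (γ • b₂)`.  If `Ξ` is bijective, then `B` is formally unramified
over `A`. -/
theorem stmt8 (A : Type*) [CommRing A] (B : Type*) [CommRing B] [Algebra A B]
    (G : Type*) [Group G] [Fintype G] (act : G →* (B ≃ₐ[A] B))
    (Ξ : B ⊗[A] B →ₐ[A] (G → B))
    (hΞdef : ∀ (b₁ b₂ : B) (γ : G), Ξ (b₁ ⊗ₜ[A] b₂) γ = b₁ * act γ b₂)
    (hΞ : Function.Bijective Ξ) :
    Algebra.FormallyUnramified A B := by
  classical
  -- key: evaluation of Ξ at the identity is the multiplication map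
  have key : ∀ x : B ⊗[A] B, Ξ x 1 = Algebra.TensorProduct.lmul' A (S := B) x := by
    intro x
    induction x using TensorProduct.induction_on with
    | zero => simp
    | tmul b₁ b₂ => simp [hΞdef, map_one act]
    | add x y hx hy =>
      have : Ξ (x + y) 1 = Ξ x 1 + Ξ y 1 := by rw [map_add]; rfl
      rw [this, hx, hy, map_add]
  obtain ⟨e, he⟩ := hΞ.2 (Pi.single (1 : G) (1 : B))
  -- 1 - e lies in the kernel ideal
  have hlmul_e : Algebra.TensorProduct.lmul' A (S := B) e = 1 := by
    rw [← key, he, Pi.single_eq_same]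
  -- every element of the kernel ideal is killed by e
  have hkill : ∀ x ∈ KaehlerDifferential.ideal A B, x * e = 0 := by
    intro x hx
    apply hΞ.1
    rw [map_mul, he, map_zero]
    funext γ
    by_cases h : γ = 1
    · subst h
      simp [key x, RingHom.mem_ker.mp hx]
    · simp [Pi.single_eq_of_ne h]
  have hmem : (1 : B ⊗[A] B) - e ∈ KaehlerDifferential.ideal A B := by
    rw [RingHom.mem_ker, map_sub, map_one, hlmul_e, sub_self]
  constructor
  rw [KaehlerDifferential, Ideal.cotangent_subsingleton_iff]
  refine le_antisymm (Ideal.mul_le_left) ?_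
  intro x hx
  have : x = x * ((1 : B ⊗[A] B) - e) := by
    rw [mul_sub, mul_one, hkill x hx, sub_zero]
  rw [this]
  exact Ideal.mul_mem_mul hx hmem
end

section
/- Let A be a commutative ring, B a commutative A-algebra, and G a finite group acting on B by A-algebra automorphisms (a group homomorphism G →* (B ≃ₐ[A] B)). Define the A-algebra homomorphism Ξ : B ⊗_A B → (G → B) by Ξ(b₁ ⊗ b₂)(γ) = b₁ · (γ • b₂). If Ξ is bijective, then the kernel of the multiplication map μ : B ⊗_A B → B (μ(b₁ ⊗ b₂) = b₁b₂) is generated by an idempotent: there exists ε ∈ B ⊗_A B with ε² = ε and ker μ = (ε), the ideal generated by ε. -/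
open scoped TensorProduct

/-- Let `A` be a commutative ring, `B` a commutative `A`-algebra, and
`G` a finite group acting on `B` by `A`-algebra automorphisms.  Let
`Ξ : B ⊗_A B →ₐ[A] (G → B)` be the `A`-algebra homomorphism determined by
`Ξ (b₁ ⊗ b₂) γ = b₁ * (γ • b₂)`.  If `Ξ` is bijective, then the kernel of the
multiplication map `μ : B ⊗_A B → B`, `b₁ ⊗ b₂ ↦ b₁ * b₂`, is generated by an
idempotent element. -/
theorem stmt9 (A : Type*) [CommRing A] (B : Type*) [CommRing B] [Algebra A B]
    (G : Type*) [Group G] [Fintype G] (act : G →* (B ≃ₐ[A] B))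
    (Ξ : B ⊗[A] B →ₐ[A] (G → B))
    (hΞdef : ∀ (b₁ b₂ : B) (γ : G), Ξ (b₁ ⊗ₜ[A] b₂) γ = b₁ * act γ b₂)
    (hΞ : Function.Bijective Ξ) :
    ∃ ε : B ⊗[A] B, ε * ε = ε ∧
      RingHom.ker (Algebra.TensorProduct.lmul' A (S := B)) = Ideal.span {ε} := by
  classical
  -- relate μ to Ξ evaluated at 1
  have hμ : ∀ x : B ⊗[A] B, Algebra.TensorProduct.lmul' A (S := B) x = Ξ x 1 := by
    intro x
    induction x using TensorProduct.induction_on with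
    | zero => simp
    | tmul b₁ b₂ => simp [hΞdef, map_one act]
    | add x y hx hy =>
        simp only [map_add]
        rw [Pi.add_apply, hx, hy]
  set e : G → B := fun γ => if γ = 1 then 0 else 1 with he
  obtain ⟨ε, hε⟩ := hΞ.2 e
  have hee : e * e = e := by
    funext γ; by_cases h : γ = 1 <;> simp [he, h]
  refine ⟨ε, ?_, ?_⟩
  · apply hΞ.1
    rw [map_mul, hε, hee]
  · apply le_antisymm
    · intro x hx
      have hx1 : Ξ x 1 = 0 := by
        rw [← hμ]; exact hx
      have : x = ε * x := by
        apply hΞ.1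
        rw [map_mul, hε]
        funext γ
        by_cases h : γ = 1
        · simp [he, h, hx1]
        · simp [he, h]
      rw [this]
      exact Ideal.mul_mem_right _ _ (Ideal.subset_span rfl)
    · rw [Ideal.span_le, Set.singleton_subset_iff]
      show Algebra.TensorProduct.lmul' A (S := B) ε = 0
      rw [hμ, hε]
      simp [he]
end
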